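/- Let m ≥ 2, b > 1, δ > 1. Define x_i = δ·b^{im} and y_i = ∑_{j=1}^{m-1} b^{im+j}. Then sup_{i≥0} (x_i + 2∑_{j=0}^{i}(x_j + y_j))/x_i = 1 + 2·b^m/(b^m - 1) + (2/δ)·((b^m - b)/(b-1))·(b^m/(b^m - 1)). -/

import Mathlib

/-!
Every round contributes a geometric block: round `j` explores `δ·b^{jm}` on the predicted ray and
`c·b^{jm}` on the others, where `c = ∑_{l=1}^{m-1} b^l = (b^m - b)/(b - 1)`. Summing the geometric
series, the `i`-th ratio equals `L - K·b^{-im}` with `K ≥ 0`, so the ratios increase to their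
supremum `L = 1 + 2(1 + c/δ)·b^m/(b^m - 1)`, which is the stated value.
-/

open Finset Filter

theorem sum_Icc_pow_add {α : Type*} [DivisionRing α] {b : α} (hb : b ≠ 1) {m : ℕ} (hm : 1 ≤ m)
    (k : ℕ) : ∑ l ∈ Icc 1 (m - 1), b ^ (k + l) = b ^ k * ((b ^ m - b) / (b - 1)) := by
  have hIcc : Icc 1 (m - 1) = Ico 1 m := by
    rw [← Ico_add_one_right_eq_Icc, Nat.sub_add_cancel hm]
  simp only [pow_add, ← mul_sum, hIcc, geom_sum_Ico hb hm, pow_one]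

theorem sum_range_rounds {α : Type*} [Field α] {b : α} (hb : b ≠ 1) {m : ℕ} (hm : 1 ≤ m)
    (hbm : b ^ m ≠ 1) (δ : α) (i : ℕ) :
    ∑ j ∈ range (i + 1), (δ * b ^ (j * m) + ∑ l ∈ Icc 1 (m - 1), b ^ (j * m + l)) =
      (δ + (b ^ m - b) / (b - 1)) * (((b ^ m) ^ (i + 1) - 1) / (b ^ m - 1)) := by
  have hround : ∀ j : ℕ, δ * b ^ (j * m) + ∑ l ∈ Icc 1 (m - 1), b ^ (j * m + l) =
      (δ + (b ^ m - b) / (b - 1)) * (b ^ m) ^ j := fun j => by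
    rw [sum_Icc_pow_add hb hm, mul_comm j m, pow_mul]
    ring
  rw [sum_congr rfl fun j _ => hround j, ← mul_sum, geom_sum_eq hbm]

theorem ciSup_sub_mul_pow_of_lt_one {L K r : ℝ} (hK : 0 ≤ K) (hr₀ : 0 ≤ r) (hr₁ : r < 1) :
    ⨆ i : ℕ, (L - K * r ^ i) = L := by
  have hmono : Monotone fun i : ℕ => L - K * r ^ i := fun i j hij =>
    sub_le_sub_left (mul_le_mul_of_nonneg_left (pow_le_pow_of_le_one hr₀ hr₁.le hij) hK) L
  have htendsto : Tendsto (fun i : ℕ => L - K * r ^ i) atTop (nhds L) := by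
    simpa using ((tendsto_pow_atTop_nhds_zero_of_lt_one hr₀ hr₁).const_mul K).const_sub L
  exact (isLUB_of_tendsto_atTop hmono htendsto).ciSup_eq

theorem biased_search_consistency (m : ℕ) (hm : 2 ≤ m) (b δ : ℝ) (hb : 1 < b)
    (hδ : 1 < δ) :
    (⨆ i : ℕ,
        ((δ * b ^ (i * m) + 2 * ∑ j ∈ Finset.range (i + 1),
            (δ * b ^ (j * m) + ∑ l ∈ Finset.Icc 1 (m - 1), b ^ (j * m + l))) /
          (δ * b ^ (i * m))))
      = 1 + 2 * b ^ m / (b ^ m - 1)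
        + (2 / δ) * ((b ^ m - b) / (b - 1)) * (b ^ m / (b ^ m - 1)) := by
  have hm₁ : 1 ≤ m := by omega
  have hB : 1 < b ^ m := one_lt_pow₀ hb (by omega)
  set c := (b ^ m - b) / (b - 1)
  have hc₀ : 0 ≤ c :=
    div_nonneg (by linarith [le_self_pow₀ hb.le (by omega : m ≠ 0)]) (by linarith)
  have hratio : ∀ i : ℕ,
      (δ * b ^ (i * m) + 2 * ∑ j ∈ range (i + 1),
          (δ * b ^ (j * m) + ∑ l ∈ Icc 1 (m - 1), b ^ (j * m + l))) / (δ * b ^ (i * m)) =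
        (1 + 2 * (δ + c) * b ^ m / (δ * (b ^ m - 1))) -
          2 * (δ + c) / (δ * (b ^ m - 1)) * ((b ^ m)⁻¹) ^ i := fun i => by
    have : b ^ m - 1 ≠ 0 := by linarith
    have : (b ^ m) ^ i ≠ 0 := by positivity
    rw [sum_range_rounds hb.ne' hm₁ hB.ne' δ i, mul_comm i m, pow_mul, inv_pow]
    field_simp
    ring
  rw [iSup_congr hratio, ciSup_sub_mul_pow_of_lt_one
    (div_nonneg (by linarith) (mul_pos (by linarith) (by linarith)).le) (by positivity)
    (inv_lt_one_of_one_lt₀ hB)]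
  field_simp
  ring
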